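/- With A = A_{n,m} ⊆ B = k[x_1,…,x_n,y_1,…,y_m,z] and the G_a-action z ↦ z + t y_1, the invariant ring B^{G_a} = k[x_1,…,x_n,y_1,…,y_m] is algebraic over A^{G_a} (they have the same fraction field) but is not integral over A^{G_a}. -/

import Mathlib

open MvPolynomial

/-- The variables of `B_{n,m} = k[x_1,…,x_n,y_1,…,y_m,z]`. -/
abbrev BonnetVars (n m : ℕ) := Fin n ⊕ Fin m ⊕ Unit

variable (k : Type*) [Field k] (n m : ℕ)

/-- The variable `x_i`. -/
noncomputable def Xv (i : Fin n) : MvPolynomial (BonnetVars n m) k := X (Sum.inl i)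
/-- The variable `y_j`. -/
noncomputable def Yv (j : Fin m) : MvPolynomial (BonnetVars n m) k := X (Sum.inr (Sum.inl j))
/-- The variable `z`. -/
noncomputable def Zv : MvPolynomial (BonnetVars n m) k := X (Sum.inr (Sum.inr ()))

/-- The generators of the subalgebra `A_{n,m}`: the `y_j`, `z`, the polynomials
`x_i^2 + x_i z` and `x_i^3 + x_i^2 z`, and the monomials `x_1^{i_1}⋯x_n^{i_n} y_j`
with all `i_k ≤ 1`. -/
noncomputable def AnmGens : Set (MvPolynomial (BonnetVars n m) k) :=
  Set.range (Yv k n m) ∪ {Zv k n m}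
    ∪ Set.range (fun i => Xv k n m i ^ 2 + Xv k n m i * Zv k n m)
    ∪ Set.range (fun i => Xv k n m i ^ 3 + Xv k n m i ^ 2 * Zv k n m)
    ∪ {p | ∃ (s : Finset (Fin n)) (j : Fin m), p = (∏ i ∈ s, Xv k n m i) * Yv k n m j}

/-- The subalgebra `A_{n,m}` of `B_{n,m}`. -/
noncomputable def Anm : Subalgebra k (MvPolynomial (BonnetVars n m) k) :=
  Algebra.adjoin k (AnmGens k n m)

/-- The `G_a`-action `φ_t` on `B_{n,m}`: `x_i ↦ x_i`, `y_j ↦ y_j`,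
`z ↦ z + t y_1` (assuming `m ≥ 1`). -/
noncomputable def phiGa (hm : 0 < m) (t : k) :
    MvPolynomial (BonnetVars n m) k →ₐ[k] MvPolynomial (BonnetVars n m) k :=
  MvPolynomial.aeval (fun w => match w with
    | Sum.inl i => Xv k n m i
    | Sum.inr (Sum.inl j) => Yv k n m j
    | Sum.inr (Sum.inr _) => Zv k n m + MvPolynomial.C t * Yv k n m ⟨0, hm⟩)

/-!
For `b ∈ k[x, y]` some power `y_1 ^ N` multiplies `b` into `A_{n,m}`; both `y_1 ^ N` and
`y_1 ^ N * b` are invariant, so `b` is a root of `y_1 ^ N * T - y_1 ^ N * b`.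

On `A_{n,m}` the evaluation at `x_i = λ, y = 0, z = -λ` agrees with the evaluation at
`x = 0, y = 0, z = -λ`. For `u ≠ 0` the line `x = 0, y_1 = u, y_j = 0 (j ≠ 1)` is a single
`G_a`-orbit, so an invariant is constant on it; being polynomial in `u`, it then takes at
`x = y = 0` a value independent of `z`. Hence every element of `A_{n,m}^{G_a}` takes at
`x_i = λ, y = 0, z = -λ` a value independent of `λ`, and this evaluation turns a monic
equation for `x_1` into a nonzero polynomial over the infinite field `k` vanishing at every `λ`.
-/

theorem Polynomial.exists_ne_zero_coeff_mem_eval_eq_zero_of_mul_mem {R S : Type*} [CommRing R]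
    [SetLike S R] [SubringClass S R] {s : S} {a b : R} (ha : a ≠ 0) (has : a ∈ s)
    (habs : a * b ∈ s) :
    ∃ p : Polynomial R, p ≠ 0 ∧ (∀ i, p.coeff i ∈ s) ∧ p.eval b = 0 := by
  refine ⟨Polynomial.C a * Polynomial.X - Polynomial.C (a * b), fun h => ha ?_, fun i => ?_,
    by simp only [eval_sub, eval_mul, eval_C, eval_X, sub_self]⟩
  · simpa only [coeff_sub, coeff_C_mul_X, coeff_C, if_true, one_ne_zero, if_false, sub_zero,
      coeff_zero] using congrArg (Polynomial.coeff · 1) h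
  · rw [Polynomial.coeff_sub, Polynomial.coeff_C_mul_X, Polynomial.coeff_C]
    split_ifs <;> simp_all

theorem Polynomial.Monic.eval_ne_zero_of_forall_map_coeff_eq {R K : Type*} [CommRing R]
    [CommRing K] [IsDomain K] [Infinite K] {p : Polynomial R} (hp : p.Monic) (g : R →+* K)
    (f : K → R →+* K) {b : R} (hfb : ∀ c, f c b = c)
    (hcoeff : ∀ c i, f c (p.coeff i) = g (p.coeff i)) : p.eval b ≠ 0 := by
  intro hpb
  have hroots : ∀ c, (p.map g).eval c = 0 := fun c => by
    have hmap : p.map g = p.map (f c) := Polynomial.ext fun i => by simp [hcoeff]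
    have h := Polynomial.eval₂_hom (p := p) (f c) b
    rw [hfb, hpb, map_zero] at h
    rwa [hmap, Polynomial.eval_map]
  exact (hp.map g).ne_zero (Polynomial.funext fun c => by simp [hroots])

variable {k n m}

@[simp] theorem phiGa_Xv (hm : 0 < m) (t : k) (i : Fin n) :
    phiGa k n m hm t (Xv k n m i) = Xv k n m i := by
  simp [phiGa, Xv]

@[simp] theorem phiGa_Yv (hm : 0 < m) (t : k) (j : Fin m) :
    phiGa k n m hm t (Yv k n m j) = Yv k n m j := by
  simp [phiGa, Yv]

variable (k n m) in
noncomputable def GaInvariants (hm : 0 < m) : Subalgebra k (MvPolynomial (BonnetVars n m) k) :=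
  ⨅ t : k, AlgHom.equalizer (phiGa k n m hm t) (AlgHom.id k _)

theorem mem_GaInvariants {hm : 0 < m} {c : MvPolynomial (BonnetVars n m) k} :
    c ∈ GaInvariants k n m hm ↔ ∀ t : k, phiGa k n m hm t c = c := by
  simp [GaInvariants, Algebra.mem_iInf, AlgHom.mem_equalizer]

theorem supported_le_GaInvariants (hm : 0 < m) :
    supported k {w : BonnetVars n m | w ≠ Sum.inr (Sum.inr ())} ≤ GaInvariants k n m hm := by
  rw [supported_eq_adjoin_X, Algebra.adjoin_le_iff]
  rintro _ ⟨(i | j | u), hw, rfl⟩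
  · exact mem_GaInvariants.2 fun t => phiGa_Xv hm t i
  · exact mem_GaInvariants.2 fun t => phiGa_Yv hm t j
  · exact absurd rfl hw

theorem Yv_mem_Anm (j : Fin m) : Yv k n m j ∈ Anm k n m :=
  Algebra.subset_adjoin (Or.inl (Or.inl (Or.inl (Or.inl ⟨j, rfl⟩))))

theorem Yv_mul_Xv_mem_Anm (i : Fin n) (j : Fin m) : Yv k n m j * Xv k n m i ∈ Anm k n m := by
  rw [mul_comm, ← Finset.prod_singleton (Xv k n m) i]
  exact Algebra.subset_adjoin (Or.inr ⟨{i}, j, rfl⟩)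

theorem supported_le_saturation_Anm (hm : 0 < m) :
    supported k {w : BonnetVars n m | w ≠ Sum.inr (Sum.inr ())} ≤
      (Anm k n m).saturation (Submonoid.powers (Yv k n m ⟨0, hm⟩))
        (Submonoid.powers_le.2 (Yv_mem_Anm ⟨0, hm⟩)) := by
  rw [supported_eq_adjoin_X, Algebra.adjoin_le_iff]
  rintro _ ⟨(i | j | u), hw, rfl⟩
  · refine ⟨_, Submonoid.mem_powers _, ?_⟩
    exact Yv_mul_Xv_mem_Anm i ⟨0, hm⟩
  · exact Subalgebra.le_saturation (Yv_mem_Anm j)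
  · exact absurd rfl hw

variable (k n m) in
noncomputable def evalXZ (lam : k) : MvPolynomial (BonnetVars n m) k →ₐ[k] k :=
  aeval fun w => match w with
    | Sum.inl _ => lam
    | Sum.inr (Sum.inl _) => 0
    | Sum.inr (Sum.inr _) => -lam

variable (k n m) in
noncomputable def specializeY (hm : 0 < m) (lam : k) :
    MvPolynomial (BonnetVars n m) k →ₐ[k] Polynomial k :=
  aeval fun w => match w with
    | Sum.inl _ => 0
    | Sum.inr (Sum.inl j) => if j = ⟨0, hm⟩ then Polynomial.X else 0
    | Sum.inr (Sum.inr _) => Polynomial.C (-lam)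

@[simp] theorem evalXZ_Xv (lam : k) (i : Fin n) : evalXZ k n m lam (Xv k n m i) = lam := by
  simp [evalXZ, Xv]

@[simp] theorem evalXZ_Yv (lam : k) (j : Fin m) : evalXZ k n m lam (Yv k n m j) = 0 := by
  simp [evalXZ, Yv]

@[simp] theorem evalXZ_Zv (lam : k) : evalXZ k n m lam (Zv k n m) = -lam := by
  simp [evalXZ, Zv]

@[simp] theorem specializeY_Xv (hm : 0 < m) (lam : k) (i : Fin n) :
    specializeY k n m hm lam (Xv k n m i) = 0 := by
  simp [specializeY, Xv]

@[simp] theorem specializeY_Zv (hm : 0 < m) (lam : k) :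
    specializeY k n m hm lam (Zv k n m) = Polynomial.C (-lam) := by
  simp [specializeY, Zv]

@[simp] theorem eval_zero_specializeY_Yv (hm : 0 < m) (lam : k) (j : Fin m) :
    (specializeY k n m hm lam (Yv k n m j)).eval 0 = 0 := by
  simp only [specializeY, Yv, aeval_X]
  split_ifs <;> simp

theorem Anm_le_equalizer_evalXZ (hm : 0 < m) (lam : k) :
    Anm k n m ≤ AlgHom.equalizer (evalXZ k n m lam)
      ((Polynomial.aeval 0).comp (specializeY k n m hm lam)) := by
  refine Algebra.adjoin_le fun c hc => ?_
  rcases hc with (((⟨j, rfl⟩ | rfl) | ⟨i, rfl⟩) | ⟨i, rfl⟩) | ⟨s, j, rfl⟩ <;>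
    simp <;> ring

theorem aeval_comp_specializeY (hm : 0 < m) (lam : k) {u : k} (hu : u ≠ 0) :
    (Polynomial.aeval u).comp (specializeY k n m hm lam) =
      ((Polynomial.aeval u).comp (specializeY k n m hm 0)).comp (phiGa k n m hm (-(lam / u))) := by
  refine algHom_ext fun w => ?_
  rcases w with i | j | _
  · simp [specializeY, phiGa, Xv]
  · simp [specializeY, phiGa, Yv]
  · simp [specializeY, phiGa, Zv, Yv, hu]

theorem specializeY_eq_of_mem_GaInvariants [Infinite k] (hm : 0 < m) (lam : k)
    {c : MvPolynomial (BonnetVars n m) k} (hc : c ∈ GaInvariants k n m hm) :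
    specializeY k n m hm lam c = specializeY k n m hm 0 c := by
  refine Polynomial.eq_of_infinite_eval_eq _ _
    ((Set.finite_singleton (0 : k)).infinite_compl.mono fun u hu => ?_)
  have h := DFunLike.congr_fun (aeval_comp_specializeY hm lam hu) c
  simpa [mem_GaInvariants.1 hc] using h

theorem evalXZ_eq_of_mem_Anm_of_mem_GaInvariants [Infinite k] (hm : 0 < m) (lam : k)
    {c : MvPolynomial (BonnetVars n m) k} (hA : c ∈ Anm k n m)
    (hG : c ∈ GaInvariants k n m hm) :
    evalXZ k n m lam c = (specializeY k n m hm 0 c).eval 0 := by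
  rw [(AlgHom.mem_equalizer _ _ _).1 (Anm_le_equalizer_evalXZ hm lam hA), AlgHom.comp_apply,
    specializeY_eq_of_mem_GaInvariants hm lam hG, Polynomial.coe_aeval_eq_eval]

theorem Xv_mem_supported (i : Fin n) :
    Xv k n m i ∈ supported k {w : BonnetVars n m | w ≠ Sum.inr (Sum.inr ())} :=
  X_mem_supported.2 (by simp)

theorem Yv_mem_supported (j : Fin m) :
    Yv k n m j ∈ supported k {w : BonnetVars n m | w ≠ Sum.inr (Sum.inr ())} :=
  X_mem_supported.2 (by simp)

/-- `B_{n,m}^{G_a} = k[x_1,…,x_n,y_1,…,y_m]` is algebraic over `A_{n,m}^{G_a}`,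
but not integral over it. -/
theorem Bnm_Ga_invariants_algebraic_not_integral (hn : 0 < n) (hm : 0 < m) [CharZero k] :
    (∀ b ∈ MvPolynomial.supported k {w : BonnetVars n m | w ≠ Sum.inr (Sum.inr ())},
      ∃ p : Polynomial (MvPolynomial (BonnetVars n m) k), p ≠ 0 ∧
        (∀ i : ℕ, p.coeff i ∈ Anm k n m ∧ ∀ t : k, phiGa k n m hm t (p.coeff i) = p.coeff i) ∧
        Polynomial.eval b p = 0) ∧
    ¬ (∀ b ∈ MvPolynomial.supported k {w : BonnetVars n m | w ≠ Sum.inr (Sum.inr ())},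
      ∃ p : Polynomial (MvPolynomial (BonnetVars n m) k), p.Monic ∧
        (∀ i : ℕ, p.coeff i ∈ Anm k n m ∧ ∀ t : k, phiGa k n m hm t (p.coeff i) = p.coeff i) ∧
        Polynomial.eval b p = 0) := by
  refine ⟨fun b hb => ?_, fun H => ?_⟩
  · obtain ⟨_, ⟨N, rfl⟩, hN⟩ := supported_le_saturation_Anm hm hb
    have hy : Yv k n m ⟨0, hm⟩ ^ N ∈ Anm k n m ⊓ GaInvariants k n m hm :=
      pow_mem (Algebra.mem_inf.2
        ⟨Yv_mem_Anm _, supported_le_GaInvariants hm (Yv_mem_supported _)⟩) N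
    have hyb : Yv k n m ⟨0, hm⟩ ^ N * b ∈ Anm k n m ⊓ GaInvariants k n m hm :=
      Algebra.mem_inf.2 ⟨hN, mul_mem hy.2 (supported_le_GaInvariants hm hb)⟩
    obtain ⟨p, hp, hcoeff, hroot⟩ := Polynomial.exists_ne_zero_coeff_mem_eval_eq_zero_of_mul_mem
      (pow_ne_zero N (X_ne_zero _)) hy hyb
    exact ⟨p, hp, fun i => ⟨(hcoeff i).1, mem_GaInvariants.1 (hcoeff i).2⟩, hroot⟩
  · obtain ⟨p, hp, hcoeff, hroot⟩ := H _ (Xv_mem_supported ⟨0, hn⟩)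
    refine hp.eval_ne_zero_of_forall_map_coeff_eq
      ((Polynomial.aeval 0).comp (specializeY k n m hm 0)).toRingHom
      (fun lam => (evalXZ k n m lam).toRingHom) (fun lam => evalXZ_Xv lam _)
      (fun lam i => ?_) hroot
    exact evalXZ_eq_of_mem_Anm_of_mem_GaInvariants hm lam (hcoeff i).1
      (mem_GaInvariants.2 (hcoeff i).2)
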